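/- arXiv:2206.11236 — 2 statements merged into one kernel-verified Lean document; each statement's English description precedes it below -/
import Mathlib

section
/- For n ≥ 1, the sum over all signed permutations σ in the hyperoctahedral group B_n of (-1)^{cyc(σ)} s^{neg(σ)} t^{nsum(σ)} · ∏_{i ∈ EXC_B(σ)} x_i equals -(1 + (-1)^{n-1} x_n s^n t^{n(n+1)/2}) · ∏_{j=1}^{n-1}(x_j - 1). -/
/-!
Fix the sign vector `ε`. The weight `s^neg t^nsum` depends only on `ε`, and
`(-1)^cyc(π) = (-1)^n sign(π)`, so by the Leibniz formula the sum over `π` is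
`(-1)^n s^neg t^nsum det M_ε`, where `M_ε i j = x_j` if `j ∈ EXC_B(σ)` whenever `|σ|(j) = i`, and
`1` otherwise. If `ε` takes both values, the rows of `M_ε` indexed by the least negated value and by
the least non-negated value are equal (in both, `j` is an excedance iff `j` is negated), so
`det M_ε = 0`. For the two constant sign vectors, `M_ε i j = if j < i then a_j else b_j`;
subtracting from each row the next one makes it lower triangular with diagonal
`b_0 - a_0, …, b_{n-2} - a_{n-2}, b_{n-1}`.
-/

open Finset

/-
A signed permutation σ ∈ Bₙ is encoded by a pair (π, ε), where
π : Equiv.Perm (Fin n) is the underlying permutation |σ| (0-based) and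
ε v = true iff the value v+1 occurs negated in σ; thus σ(i) = sval ε (π i),
where sval ε v = ±(v+1).
-/

/-- The signed value ±(v+1) of the (0-based) value `v`. -/
def sval {n : ℕ} (ε : Fin n → Bool) (v : Fin n) : ℤ :=
  if ε v then -((v : ℤ) + 1) else (v : ℤ) + 1

/-- Number of cycles of the underlying permutation |σ| (counting fixed points). -/
def cyc {n : ℕ} (π : Equiv.Perm (Fin n)) : ℕ :=
  π.cycleType.card + (Finset.univ.filter fun i => π i = i).card

/-- neg(σ) = #{i : σ(i) < 0}. -/
def negB {n : ℕ} (ε : Fin n → Bool) : ℕ :=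
  (Finset.univ.filter fun v => ε v = true).card

/-- nsum(σ) = ∑_{σ(i)<0} |σ(i)|. -/
def nsumB {n : ℕ} (ε : Fin n → Bool) : ℕ :=
  ∑ v ∈ Finset.univ.filter (fun v => ε v = true), (v.val + 1)

/-- Type B excedance set (as 0-based values):
v ∈ EXC_B(σ) iff σ(v+1) = -(v+1) or σ(v+1) > σ(i) where σ(i) = ±(v+1);
here σ(v+1) = sval ε (π v) and σ(i) = sval ε v. -/
def excB {n : ℕ} (π : Equiv.Perm (Fin n)) (ε : Fin n → Bool) : Finset (Fin n) :=
  Finset.univ.filter fun v =>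
    sval ε (π v) = -((v : ℤ) + 1) ∨ sval ε v < sval ε (π v)

open Matrix

section Triangular
variable {R : Type*} [CommRing R] {n : ℕ}

def rowDiffMatrix (n : ℕ) (R : Type*) [CommRing R] : Matrix (Fin n) (Fin n) R :=
  of fun i k => (if k = i then 1 else 0) - if (k : ℕ) = i + 1 then 1 else 0

theorem det_rowDiffMatrix : (rowDiffMatrix n R).det = 1 := by
  rw [det_of_isUpperTriangular]
  · simp [rowDiffMatrix]
  · intro i j (hji : j < i)
    simp [rowDiffMatrix, hji.ne, show (j : ℕ) ≠ i + 1 by omega]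

theorem rowDiffMatrix_mul_apply (A : Matrix (Fin n) (Fin n) R) (i j : Fin n) :
    (rowDiffMatrix n R * A) i j = A i j - if h : (i : ℕ) + 1 < n then A ⟨i + 1, h⟩ j else 0 := by
  simp only [rowDiffMatrix, mul_apply, of_apply, sub_mul, ite_mul, one_mul, zero_mul,
    sum_sub_distrib, sum_ite_eq', mem_univ, if_true]
  split_ifs with h
  · rw [sum_eq_single_of_mem ⟨i + 1, h⟩ (mem_univ _) fun k _ hk => if_neg (hk ∘ Fin.ext)]
    simp
  · rw [sum_eq_zero fun k _ => if_neg (by omega)]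

theorem det_ite_lt (a b : Fin (n + 1) → R) :
    (of fun i j : Fin (n + 1) => if j < i then a j else b j).det
      = b (Fin.last n) * ∏ i : Fin n, (b i.castSucc - a i.castSucc) := by
  set A := of fun i j : Fin (n + 1) => if j < i then a j else b j
  have hlower : (rowDiffMatrix (n + 1) R * A).IsLowerTriangular := by
    intro i j (hij : i < j)
    rw [rowDiffMatrix_mul_apply, dif_pos (by omega)]
    simp only [A, of_apply]
    rw [if_neg hij.not_gt, if_neg (by rw [Fin.lt_def]; simp; omega), sub_self]
  have hdiag (i : Fin n) :
      (rowDiffMatrix (n + 1) R * A) i.castSucc i.castSucc = b i.castSucc - a i.castSucc := by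
    rw [rowDiffMatrix_mul_apply, dif_pos (by simp)]
    simp only [A, of_apply]
    rw [if_neg (lt_irrefl _), if_pos (by rw [Fin.lt_def]; simp)]
  have hlast : (rowDiffMatrix (n + 1) R * A) (Fin.last n) (Fin.last n) = b (Fin.last n) := by
    simp [rowDiffMatrix_mul_apply, A]
  rw [← one_mul A.det, ← det_rowDiffMatrix, ← det_mul, det_of_isLowerTriangular _ hlower,
    Fin.prod_univ_castSucc, hlast, mul_comm]
  simp only [hdiag]

end Triangular

section Leibniz
variable {R : Type*} [CommRing R]

theorem Equiv.Perm.neg_one_pow_card_cycleType_add_card_fixed {α : Type*} [Fintype α]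
    [DecidableEq α] (σ : Equiv.Perm α) :
    (-1 : R) ^ (Multiset.card σ.cycleType + #{a | σ a = a})
      = (-1) ^ Fintype.card α * (Equiv.Perm.sign σ : ℤ) := by
  have hfix : #{a | σ a = a} = Fintype.card α - #σ.support := by
    rw [← card_compl]
    congr 1
    ext a
    simp [Equiv.Perm.mem_support]
  obtain ⟨m, hm⟩ := Nat.exists_eq_add_of_le (card_le_univ σ.support)
  rw [hfix, Equiv.Perm.sign_of_cycleType, Equiv.Perm.sum_cycleType, hm, Nat.add_sub_cancel_left]
  have hsq : (-1 : R) ^ #σ.support * (-1) ^ #σ.support = 1 := by rw [← mul_pow]; simp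
  push_cast
  linear_combination (-(-1 : R) ^ m * (-1) ^ Multiset.card σ.cycleType) * hsq

theorem sum_neg_one_pow_cyc_mul_prod {n : ℕ} (M : Matrix (Fin n) (Fin n) R) :
    ∑ π : Equiv.Perm (Fin n), (-1 : R) ^ cyc π * ∏ v, M (π v) v = (-1) ^ n * M.det := by
  rw [det_apply', mul_sum]
  refine sum_congr rfl fun π _ => ?_
  rw [cyc, π.neg_one_pow_card_cycleType_add_card_fixed, Fintype.card_fin]
  ring

end Leibniz

section Excedance
variable {R : Type*} [CommRing R] {n : ℕ}

def excMatrix (x : Fin n → R) (ε : Fin n → Bool) : Matrix (Fin n) (Fin n) R :=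
  of fun i j => if sval ε i = -((j : ℤ) + 1) ∨ sval ε j < sval ε i then x j else 1

theorem prod_excB_eq_prod_excMatrix (x : Fin n → R) (π : Equiv.Perm (Fin n))
    (ε : Fin n → Bool) : ∏ v ∈ excB π ε, x v = ∏ v, excMatrix x ε (π v) v :=
  prod_filter _ _

theorem excMatrix_row_eq {x : Fin n → R} {ε : Fin n → Bool} {a b : Fin n}
    (ha : ε a = true) (hb : ε b = false)
    (ha_min : ∀ v, ε v = true → a ≤ v) (hb_min : ∀ v, ε v = false → b ≤ v) :
    excMatrix x ε a = excMatrix x ε b := by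
  funext j
  have hrow_a : (sval ε a = -((j : ℤ) + 1) ∨ sval ε j < sval ε a) ↔ ε j = true := by
    cases hj : ε j
    · have hja : (j : ℕ) ≠ a := Fin.val_ne_of_ne fun h => by simp [h, ha] at hj
      simp [sval, hj, ha]
      omega
    · have := Fin.le_def.mp (ha_min j hj)
      simp [sval, hj, ha]
      omega
  have hrow_b : (sval ε b = -((j : ℤ) + 1) ∨ sval ε j < sval ε b) ↔ ε j = true := by
    cases hj : ε j
    · have := Fin.le_def.mp (hb_min j hj)
      simp [sval, hj, hb]
      omega
    · simp [sval, hj, hb]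
      omega
  simp only [excMatrix, of_apply, hrow_a, hrow_b]

theorem det_excMatrix_eq_zero {x : Fin n → R} {ε : Fin n → Bool} {a b : Fin n}
    (ha : ε a = true) (hb : ε b = false) : (excMatrix x ε).det = 0 := by
  obtain ⟨a₀, ha₀, ha₀_min⟩ := exists_min_image {v | ε v = true} id ⟨a, by simpa⟩
  obtain ⟨b₀, hb₀, hb₀_min⟩ := exists_min_image {v | ε v = false} id ⟨b, by simpa⟩
  simp only [mem_filter, mem_univ, true_and, id] at ha₀ hb₀ ha₀_min hb₀_min
  refine det_zero_of_row_eq (fun h => ?_) (excMatrix_row_eq ha₀ hb₀ ha₀_min hb₀_min)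
  simp [h, hb₀] at ha₀

theorem excMatrix_false (x : Fin n → R) :
    excMatrix x (fun _ => false) = of fun i j => if j < i then x j else 1 := by
  ext i j
  simp only [excMatrix, of_apply, sval, Fin.lt_def, Bool.false_eq_true, if_false]
  congr 1
  apply propext
  omega

theorem excMatrix_true (x : Fin n → R) :
    excMatrix x (fun _ => true) = of fun i j => if j < i then 1 else x j := by
  ext i j
  simp only [excMatrix, of_apply, sval, Fin.lt_def, if_true]
  by_cases h : (j : ℕ) < i
  · rw [if_neg (by omega), if_pos h]
  · rw [if_pos (by omega), if_neg h]

theorem sum_perm_term_eq_det_excMatrix (x : Fin n → R) (S T : R) (ε : Fin n → Bool) :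
    ∑ π : Equiv.Perm (Fin n), (-1 : R) ^ cyc π * S ^ negB ε * T ^ nsumB ε * ∏ v ∈ excB π ε, x v
      = (-1) ^ n * (S ^ negB ε * T ^ nsumB ε * (excMatrix x ε).det) := by
  rw [mul_left_comm, ← sum_neg_one_pow_cyc_mul_prod, mul_sum]
  refine sum_congr rfl fun π _ => ?_
  rw [prod_excB_eq_prod_excMatrix]
  ring

end Excedance

theorem negB_const_false (n : ℕ) : negB (fun _ : Fin n => false) = 0 := by
  simp [negB]

theorem nsumB_const_false (n : ℕ) : nsumB (fun _ : Fin n => false) = 0 := by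
  simp [nsumB]

theorem negB_const_true (n : ℕ) : negB (fun _ : Fin n => true) = n := by
  simp [negB]

theorem nsumB_const_true (n : ℕ) : nsumB (fun _ : Fin n => true) = n * (n + 1) / 2 := by
  rw [nsumB, filter_true_of_mem fun _ _ => rfl, Fin.sum_univ_eq_sum_range (· + 1),
    ← add_zero (∑ i ∈ range n, (i + 1)), ← sum_range_succ' (fun i => i), sum_range_id,
    Nat.add_sub_cancel, Nat.mul_comm]

theorem Fin.prod_filter_val_lt_eq_prod_castSucc {M : Type*} [CommMonoid M] {m : ℕ}
    (f : Fin (m + 1) → M) :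
    ∏ v ∈ univ.filter (fun v : Fin (m + 1) => (v : ℕ) < m), f v = ∏ i : Fin m, f i.castSucc := by
  simp [prod_filter, Fin.prod_univ_castSucc]

/-- `x v` corresponds to `x_{v+1}`; `S`, `T` are the variables `s`, `t`. -/
theorem stmt18 {R : Type*} [CommRing R] (n : ℕ) (hn : 1 ≤ n)
    (x : Fin n → R) (S T : R) :
    ∑ π : Equiv.Perm (Fin n), ∑ ε : Fin n → Bool,
      (-1 : R) ^ cyc π * S ^ negB ε * T ^ nsumB ε * ∏ v ∈ excB π ε, x v
    = -(1 + (-1 : R) ^ (n - 1) * x ⟨n - 1, by omega⟩ * S ^ n * T ^ (n * (n + 1) / 2)) *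
        ∏ v ∈ Finset.univ.filter (fun v : Fin n => v.val < n - 1), (x v - 1) := by
  obtain ⟨m, rfl⟩ := Nat.exists_eq_add_of_le' hn
  have hmixed (ε : Fin (m + 1) → Bool) (h : ε ≠ (fun _ => false) ∧ ε ≠ (fun _ => true)) :
      (-1) ^ (m + 1) * (S ^ negB ε * T ^ nsumB ε * (excMatrix x ε).det) = 0 := by
    obtain ⟨a, ha⟩ := Function.ne_iff.mp h.1
    obtain ⟨b, hb⟩ := Function.ne_iff.mp h.2
    rw [det_excMatrix_eq_zero (Bool.eq_true_of_not_eq_false ha) (Bool.eq_false_of_not_eq_true hb),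
      mul_zero, mul_zero]
  have hne : (fun _ => false : Fin (m + 1) → Bool) ≠ fun _ => true :=
    Function.ne_iff.mpr ⟨0, Bool.false_ne_true⟩
  rw [sum_comm, sum_congr rfl fun ε _ => sum_perm_term_eq_det_excMatrix x S T ε,
    Fintype.sum_eq_add _ _ hne hmixed, excMatrix_false, excMatrix_true, det_ite_lt, det_ite_lt,
    negB_const_true, nsumB_const_true]
  simp only [Nat.add_sub_cancel, Fin.prod_filter_val_lt_eq_prod_castSucc]
  have hflip : ∏ i : Fin m, (1 - x i.castSucc) = (-1) ^ m * ∏ i : Fin m, (x i.castSucc - 1) := by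
    simp_rw [← neg_sub (x _), prod_neg, card_univ, Fintype.card_fin]
  have hsq : (-1 : R) ^ m * (-1) ^ m = 1 := by rw [← mul_pow]; simp
  rw [negB_const_false, nsumB_const_false, hflip, show x ⟨m, _⟩ = x (Fin.last m) from rfl]
  linear_combination (-(∏ i : Fin m, (x i.castSucc - 1))) * hsq
end

section
/- For n ≥ 1, the sum over all signed permutations σ in B_n of (-1)^{cyc(σ)} s^{neg(σ)} t^{nsum(σ)} · ∏_{j ∈ RLM_B(σ)} y_j equals (-1)^n · ∏_{i∈[n], i even}(y_i - 1) · ∏_{i∈[n], i odd}(y_i + s t^i). -/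
open Finset

/-- Type B right-to-left minimum values (0-based):
RLM_B(σ) = {σ(i) : 0 < σ(i) < |σ(j)| for all j > i}; position i contributes
the value π i when σ(i) > 0 (i.e. ε (π i) = false) and π i < π j for all j > i. -/
def rlmB {n : ℕ} (π : Equiv.Perm (Fin n)) (ε : Fin n → Bool) : Finset (Fin n) :=
  (Finset.univ.filter fun i : Fin n =>
      ε (π i) = false ∧ ∀ j, i < j → π i < π j).image π

namespace Stmt19Aux

open Equiv Equiv.Perm

variable {n : ℕ}

/-- The set of right-to-left minimum values of π. -/
def Mset (π : Equiv.Perm (Fin n)) : Finset (Fin n) :=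
  Finset.univ.filter fun v => ∀ u, u < v → π.symm u < π.symm v

lemma mem_Mset {π : Equiv.Perm (Fin n)} {v : Fin n} :
    v ∈ Mset π ↔ ∀ u, u < v → π.symm u < π.symm v := by simp [Mset]

lemma rlmB_eq (π : Equiv.Perm (Fin n)) (ε : Fin n → Bool) :
    rlmB π ε = (Mset π).filter fun v => ε v = false := by
  ext v
  simp only [rlmB, Finset.mem_image, Finset.mem_filter, Finset.mem_univ, true_and, mem_Mset]
  constructor
  · rintro ⟨i, ⟨hε, hmin⟩, rfl⟩
    refine ⟨fun u hu => ?_, hε⟩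
    rcases lt_trichotomy (π.symm u) (π.symm (π i)) with h | h | h
    · exact h
    · exact absurd (π.symm.injective h) (by rintro rfl; exact absurd hu (lt_irrefl _))
    · have := hmin (π.symm u) (by simpa using h)
      simp at this
      exact absurd hu (not_lt.mpr this.le)
  · rintro ⟨hall, hε⟩
    refine ⟨π.symm v, ⟨by simpa using hε, fun j hj => ?_⟩, by simp⟩
    simp only [Equiv.apply_symm_apply]
    rcases lt_trichotomy (π j) v with h | h | h
    · have := hall (π j) h
      simp at this
      exact absurd hj (not_lt.mpr this.le)
    · exact absurd hj (by simp [← h])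
    · exact h


/-- Insert a permutation of `Fin n` together with a value `r` for `last` into
a permutation of `Fin (n+1)`: `last ↦ r`, `castSucc u ↦ r.succAbove (p u)`. -/
def bperm (r : Fin (n + 1)) (p : Equiv.Perm (Fin n)) : Equiv.Perm (Fin (n + 1)) :=
  (finSuccEquivLast.trans p.optionCongr).trans (finSuccEquiv' r).symm

@[simp] lemma bperm_last (r : Fin (n + 1)) (p : Equiv.Perm (Fin n)) :
    bperm r p (Fin.last n) = r := by
  simp [bperm]

@[simp] lemma bperm_castSucc (r : Fin (n + 1)) (p : Equiv.Perm (Fin n)) (u : Fin n) :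
    bperm r p u.castSucc = r.succAbove (p u) := by
  simp [bperm]

/-- The special cycle sending `last ↦ r` and `castSucc u ↦ r.succAbove u`. -/
def gperm (r : Fin (n + 1)) : Equiv.Perm (Fin (n + 1)) := bperm r 1

lemma bperm_eq_mul (r : Fin (n + 1)) (p : Equiv.Perm (Fin n)) :
    bperm r p = gperm r * (Equiv.permCongr finSuccEquivLast.symm p.optionCongr) := by
  ext x
  simp [bperm, gperm, Equiv.Perm.mul_apply, Equiv.permCongr_apply]

lemma gperm_last : gperm (Fin.last n) = 1 := by
  apply Equiv.ext
  intro x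
  induction x using Fin.lastCases with
  | last => simp [gperm]
  | cast u =>
    have : Fin.succAbove (Fin.last n) u = u.castSucc :=
      Fin.succAbove_of_castSucc_lt _ _ (Fin.castSucc_lt_last u)
    simp [gperm, this]

lemma gperm_castSucc (i : Fin n) :
    gperm i.castSucc = Equiv.swap i.castSucc i.succ * gperm i.succ := by
  apply Equiv.ext
  intro x
  rw [Equiv.Perm.mul_apply]
  induction x using Fin.lastCases with
  | last =>
    have hL : gperm i.castSucc (Fin.last n) = i.castSucc := by simp [gperm]
    have hR : gperm i.succ (Fin.last n) = i.succ := by simp [gperm]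
    rw [hL, hR, Equiv.swap_apply_right]
  | cast u =>
    have hL : gperm i.castSucc u.castSucc = Fin.succAbove i.castSucc u := by simp [gperm]
    have hR : gperm i.succ u.castSucc = Fin.succAbove i.succ u := by simp [gperm]
    rw [hL, hR]
    rcases lt_trichotomy (u : ℕ) (i : ℕ) with h | h | h
    · have e1 : Fin.succAbove i.castSucc u = u.castSucc :=
        Fin.succAbove_of_castSucc_lt _ _
          (by simp only [Fin.lt_def, Fin.coe_castSucc]; omega)
      have e2 : Fin.succAbove i.succ u = u.castSucc :=
        Fin.succAbove_of_castSucc_lt _ _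
          (by simp only [Fin.lt_def, Fin.coe_castSucc, Fin.val_succ]; omega)
      rw [e1, e2, Equiv.swap_apply_of_ne_of_ne]
      · exact fun hc => by apply_fun Fin.val at hc; simp only [Fin.coe_castSucc] at hc; omega
      · exact fun hc => by
          apply_fun Fin.val at hc
          simp only [Fin.coe_castSucc, Fin.val_succ] at hc; omega
    · have hu : u = i := Fin.ext h
      subst hu
      have e1 : Fin.succAbove u.castSucc u = u.succ :=
        Fin.succAbove_of_le_castSucc _ _ (le_refl _)
      have e2 : Fin.succAbove u.succ u = u.castSucc :=
        Fin.succAbove_of_castSucc_lt _ _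
          (by simp only [Fin.lt_def, Fin.coe_castSucc, Fin.val_succ]; omega)
      rw [e1, e2, Equiv.swap_apply_left]
    · have e1 : Fin.succAbove i.castSucc u = u.succ :=
        Fin.succAbove_of_le_castSucc _ _
          (by simp only [Fin.le_def, Fin.coe_castSucc]; omega)
      have e2 : Fin.succAbove i.succ u = u.succ :=
        Fin.succAbove_of_le_castSucc _ _
          (by simp only [Fin.le_def, Fin.coe_castSucc, Fin.val_succ]; omega)
      rw [e1, e2, Equiv.swap_apply_of_ne_of_ne]
      · exact fun hc => by
          apply_fun Fin.val at hc
          simp only [Fin.coe_castSucc, Fin.val_succ] at hc; omega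
      · exact fun hc => by
          apply_fun Fin.val at hc
          simp only [Fin.val_succ] at hc; omega

lemma sign_gperm (r : Fin (n + 1)) :
    Equiv.Perm.sign (gperm r) = (-1 : ℤˣ) ^ (n - (r : ℕ)) := by
  induction r using Fin.reverseInduction with
  | last => simp [gperm_last]
  | cast i ih =>
    rw [gperm_castSucc, map_mul, ih]
    have h1 : Equiv.Perm.sign (Equiv.swap i.castSucc i.succ) = -1 :=
      Equiv.Perm.sign_swap (by exact fun hc => by apply_fun Fin.val at hc; simp at hc)
    rw [h1]
    have h2 : n - (i.castSucc : ℕ) = (n - (i.succ : ℕ)) + 1 := by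
      have := i.isLt; simp only [Fin.coe_castSucc, Fin.val_succ]; omega
    rw [h2, pow_succ]
    exact (mul_comm _ _)

lemma sign_bperm (r : Fin (n + 1)) (p : Equiv.Perm (Fin n)) :
    Equiv.Perm.sign (bperm r p) = (-1 : ℤˣ) ^ (n - (r : ℕ)) * Equiv.Perm.sign p := by
  rw [bperm_eq_mul, map_mul, sign_gperm, Equiv.Perm.sign_permCongr, Equiv.optionCongr_sign]

lemma bperm_bijective :
    Function.Bijective (fun rp : Fin (n + 1) × Equiv.Perm (Fin n) => bperm rp.1 rp.2) := by
  rw [Fintype.bijective_iff_injective_and_card]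
  constructor
  · rintro ⟨r, p⟩ ⟨r', p'⟩ h
    simp only at h
    have hr : r = r' := by
      have := congrArg (fun q : Equiv.Perm (Fin (n+1)) => q (Fin.last n)) h
      simpa using this
    subst hr
    refine Prod.ext rfl ?_
    apply Equiv.ext
    intro u
    show p u = p' u
    have := congrArg (fun q : Equiv.Perm (Fin (n+1)) => q u.castSucc) h
    simp only [bperm_castSucc] at this
    exact Fin.succAbove_right_injective this

  · simp [Fintype.card_perm, Nat.factorial_succ]

/-- The linear-extension-type condition: every element of `A` is positioned
after all smaller values. -/
def condC (A : Finset (Fin n)) (q : Equiv.Perm (Fin n)) : Prop :=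
  ∀ v ∈ A, ∀ u, u < v → q u < q v

instance (A : Finset (Fin n)) (q : Equiv.Perm (Fin n)) : Decidable (condC A q) := by
  unfold condC; infer_instance

lemma condC_bperm (A : Finset (Fin (n + 1))) (r : Fin (n + 1)) (p : Equiv.Perm (Fin n)) :
    condC A (bperm r p) ↔
      ((Fin.last n ∈ A → r = Fin.last n) ∧
        condC (Finset.univ.filter fun u : Fin n => u.castSucc ∈ A) p) := by
  constructor
  · intro hc
    constructor
    · intro hlast
      obtain ⟨u, hu⟩ := (bperm r p).surjective (Fin.last n)
      by_cases hul : u = Fin.last n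
      · rw [← hu, hul, bperm_last]
      · have h1 : u < Fin.last n := lt_of_le_of_ne (Fin.le_last u) hul
        have := hc (Fin.last n) hlast u h1
        rw [hu] at this
        exact absurd (lt_of_lt_of_le this (Fin.le_last _)) (by simp)
    · intro v hv u huv
      simp only [Finset.mem_filter, Finset.mem_univ, true_and] at hv
      have := hc v.castSucc hv u.castSucc (Fin.castSucc_lt_castSucc_iff.mpr huv)
      rw [bperm_castSucc, bperm_castSucc] at this
      exact (Fin.succAbove_lt_succAbove_iff).mp this
  · rintro ⟨hr, hc⟩ v hv u huv
    by_cases hvl : v = Fin.last n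
    · subst hvl
      have hrr : r = Fin.last n := hr hv
      have hune : u ≠ Fin.last n := ne_of_lt huv
      rw [← Fin.castSucc_castPred u hune, bperm_last, bperm_castSucc, hrr]
      rw [Fin.succAbove_of_castSucc_lt _ _ (Fin.castSucc_lt_last _)]
      exact Fin.castSucc_lt_last _
    · have hvle : v < Fin.last n := lt_of_le_of_ne (Fin.le_last v) hvl
      have hule : u ≠ Fin.last n := ne_of_lt (lt_trans huv hvle)
      rw [← Fin.castSucc_castPred v hvl, ← Fin.castSucc_castPred u hule,
        bperm_castSucc, bperm_castSucc, Fin.succAbove_lt_succAbove_iff]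
      refine hc (v.castPred hvl) ?_ (u.castPred hule) ?_
      · simp only [Finset.mem_filter, Finset.mem_univ, true_and, Fin.castSucc_castPred]
        exact hv
      · simp only [Fin.lt_def, Fin.coe_castPred]
        exact huv

variable {R : Type*} [CommRing R]

lemma sum_pow_neg_one_fin (n : ℕ) :
    ∑ r : Fin (n + 1), ((-1 : R)) ^ (n - (r : ℕ))
      = if n % 2 = 0 then 1 else 0 := by
  rw [Fintype.sum_equiv (Fin.revPerm) _ (fun r : Fin (n+1) => ((-1:R)) ^ (r : ℕ))
    (fun r => by
      congr 1
      simp only [Fin.revPerm_apply, Fin.val_rev]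
      omega)]
  rw [Fin.sum_univ_eq_sum_range (fun i => ((-1:R))^i), neg_one_geom_sum]
  rcases Nat.even_or_odd n with h | h
  · have h2 : ¬ Even (n+1) := by simp [Nat.even_add_one, h]
    simp [h2, Nat.even_iff.mp h]
  · have h2 : Even (n+1) := by simp [Nat.even_add_one, Nat.not_even_iff_odd.mpr h]
    have h4 := Nat.odd_iff.mp h
    have h3 : ¬ (n % 2 = 0) := by omega
    simp [h2, h3, Nat.odd_iff.mp h]

lemma odds_subset_iff {n : ℕ} (A : Finset (Fin (n + 1))) :
    (Finset.univ.filter fun v : Fin (n + 1) => v.val % 2 = 1) ⊆ A ↔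
      ((n % 2 = 1 → Fin.last n ∈ A) ∧
        (Finset.univ.filter fun v : Fin n => v.val % 2 = 1) ⊆
          (Finset.univ.filter fun u : Fin n => u.castSucc ∈ A)) := by
  constructor
  · intro h
    constructor
    · intro hn
      apply h
      simp only [Finset.mem_filter, Finset.mem_univ, true_and, Fin.val_last]
      exact hn
    · intro v hv
      simp only [Finset.mem_filter, Finset.mem_univ, true_and] at hv ⊢
      apply h
      simp only [Finset.mem_filter, Finset.mem_univ, true_and, Fin.coe_castSucc]
      exact hv
  · rintro ⟨h1, h2⟩ v hv
    simp only [Finset.mem_filter, Finset.mem_univ, true_and] at hv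
    by_cases hvl : v = Fin.last n
    · subst hvl
      exact h1 (by simpa using hv)
    · have hmem : v.castPred hvl ∈ (Finset.univ.filter fun v : Fin n => v.val % 2 = 1) := by
        simp only [Finset.mem_filter, Finset.mem_univ, true_and, Fin.coe_castPred]
        exact hv
      have := h2 hmem
      simp only [Finset.mem_filter, Finset.mem_univ, true_and,
        Fin.castSucc_castPred] at this
      exact this

lemma key (n : ℕ) (A : Finset (Fin n)) :
    ∑ q : Equiv.Perm (Fin n), (if condC A q then ((Equiv.Perm.sign q : ℤ) : R) else 0)
      = if (Finset.univ.filter fun v : Fin n => v.val % 2 = 1) ⊆ A then 1 else 0 := by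
  induction n with
  | zero =>
    have h1 : condC A 1 := by intro v hv; exact absurd hv (by exact fun _ => v.elim0)
    have h2 : (Finset.univ.filter fun v : Fin 0 => v.val % 2 = 1) ⊆ A := by
      intro v _; exact v.elim0
    rw [Fintype.sum_subsingleton _ 1]
    simp [h1, h2]
  | succ n ih =>
    rw [← Fintype.sum_bijective _ (bperm_bijective (n := n)) _ _ (fun _ => rfl)]
    rw [Fintype.sum_prod_type]
    have hsummand : ∀ (r : Fin (n+1)) (p : Equiv.Perm (Fin n)),
        (if condC A (bperm r p) then ((Equiv.Perm.sign (bperm r p) : ℤ) : R) else 0)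
          = (if (Fin.last n ∈ A → r = Fin.last n) then ((-1:R)) ^ (n - (r:ℕ)) else 0)
            * (if condC (Finset.univ.filter fun u : Fin n => u.castSucc ∈ A) p
                then ((Equiv.Perm.sign p : ℤ) : R) else 0) := by
      intro r p
      simp only [condC_bperm]
      by_cases h1 : (Fin.last n ∈ A → r = Fin.last n)
      · by_cases h2 : condC (Finset.univ.filter fun u : Fin n => u.castSucc ∈ A) p
        · rw [if_pos (⟨h1, h2⟩ : _ ∧ _), if_pos h1, if_pos h2, sign_bperm]
          push_cast
          ring
        · rw [if_neg (fun hc : _ ∧ _ => h2 hc.2), if_pos h1, if_neg h2, mul_zero]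
      · rw [if_neg (fun hc : _ ∧ _ => h1 hc.1), if_neg h1, zero_mul]
    calc ∑ r : Fin (n+1), ∑ p : Equiv.Perm (Fin n),
          (if condC A (bperm r p) then ((Equiv.Perm.sign (bperm r p) : ℤ) : R) else 0)
        = (∑ r : Fin (n+1),
            (if (Fin.last n ∈ A → r = Fin.last n) then ((-1:R)) ^ (n - (r:ℕ)) else 0))
          * (∑ p : Equiv.Perm (Fin n),
              (if condC (Finset.univ.filter fun u : Fin n => u.castSucc ∈ A) p
                then ((Equiv.Perm.sign p : ℤ) : R) else 0)) := by
          rw [Finset.sum_mul_sum]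
          exact Finset.sum_congr rfl fun r _ => Finset.sum_congr rfl fun p _ => hsummand r p
      _ = _ := by
          rw [ih]
          by_cases hlast : Fin.last n ∈ A
          · have hC : (∑ r : Fin (n+1),
                (if (Fin.last n ∈ A → r = Fin.last n) then ((-1:R)) ^ (n - (r:ℕ)) else 0)) = 1 := by
              rw [Finset.sum_eq_single (Fin.last n)]
              · simp
              · intro r _ hr
                rw [if_neg (by simp [hlast, hr])]
              · simp
            rw [hC, one_mul]
            have hiff := odds_subset_iff (n := n) A
            by_cases hsub : (Finset.univ.filter fun v : Fin n => v.val % 2 = 1) ⊆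
                (Finset.univ.filter fun u : Fin n => u.castSucc ∈ A)
            · rw [if_pos hsub, if_pos (hiff.mpr ⟨fun _ => hlast, hsub⟩)]
            · rw [if_neg hsub, if_neg (fun hc => hsub (hiff.mp hc).2)]
          · have hC : (∑ r : Fin (n+1),
                (if (Fin.last n ∈ A → r = Fin.last n) then ((-1:R)) ^ (n - (r:ℕ)) else 0))
                  = if n % 2 = 0 then 1 else 0 := by
              rw [← sum_pow_neg_one_fin]
              exact Finset.sum_congr rfl fun r _ => by simp [hlast]
            rw [hC]
            have hiff := odds_subset_iff (n := n) A
            by_cases hpar : n % 2 = 0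
            · rw [if_pos hpar, one_mul]
              by_cases hsub : (Finset.univ.filter fun v : Fin n => v.val % 2 = 1) ⊆
                  (Finset.univ.filter fun u : Fin n => u.castSucc ∈ A)
              · rw [if_pos hsub,
                  if_pos (hiff.mpr ⟨fun h => absurd h (by omega), hsub⟩)]
              · rw [if_neg hsub, if_neg (fun hc => hsub (hiff.mp hc).2)]
            · rw [if_neg hpar, zero_mul,
                if_neg (fun hc => hlast ((hiff.mp hc).1 (by omega)))]

lemma neg_one_pow_cyc {R : Type*} [CommRing R] {n : ℕ} (π : Equiv.Perm (Fin n)) :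
    (-1 : R) ^ cyc π = (-1 : R) ^ n * ((Equiv.Perm.sign π : ℤ) : R) := by
  have hfix : (Finset.univ.filter fun i => π i = i).card + π.support.card = n := by
    have h := Finset.card_filter_add_card_filter_not
      (s := (Finset.univ : Finset (Fin n))) (p := fun i => π i = i)
    rw [Finset.card_univ, Fintype.card_fin] at h
    have hs : π.support = Finset.univ.filter (fun a => ¬ π a = a) := by
      ext a
      simp [Equiv.Perm.mem_support]
    rw [hs]
    exact h
  have hexp : cyc π + π.support.card = Multiset.card π.cycleType + n := by
    unfold cyc; omega
  have hsign : ((Equiv.Perm.sign π : ℤ) : R)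
      = (-1 : R) ^ (π.support.card + Multiset.card π.cycleType) := by
    have h := Equiv.Perm.sign_of_cycleType π
    rw [Equiv.Perm.sum_cycleType] at h
    rw [h]
    push_cast
    ring
  have hsq : ((-1 : R) ^ π.support.card) * ((-1 : R) ^ π.support.card) = 1 := by
    rw [← pow_add]
    exact Even.neg_one_pow ⟨_, rfl⟩
  calc (-1 : R) ^ cyc π = (-1 : R) ^ cyc π * (((-1:R) ^ π.support.card) * ((-1:R) ^ π.support.card)) := by
        rw [hsq, mul_one]
    _ = ((-1 : R) ^ (cyc π + π.support.card)) * (-1:R) ^ π.support.card := by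
        rw [pow_add]; ring
    _ = ((-1 : R) ^ (Multiset.card π.cycleType + n)) * (-1:R) ^ π.support.card := by
        rw [hexp]
    _ = (-1 : R) ^ n * ((-1:R) ^ (π.support.card + Multiset.card π.cycleType)) := by
        rw [pow_add, pow_add]; ring
    _ = _ := by rw [hsign]

lemma eps_sum {R : Type*} [CommRing R] {n : ℕ} (π : Equiv.Perm (Fin n))
    (y : Fin n → R) (S T : R) :
    ∑ ε : Fin n → Bool, S ^ negB ε * T ^ nsumB ε * ∏ v ∈ rlmB π ε, y v
      = ∏ v : Fin n,
          (if v ∈ Mset π then y v + S * T ^ (v.val + 1) else 1 + S * T ^ (v.val + 1)) := by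
  have hterm : ∀ ε : Fin n → Bool,
      S ^ negB ε * T ^ nsumB ε * ∏ v ∈ rlmB π ε, y v
        = ∏ v : Fin n, (if ε v = true then S * T ^ (v.val + 1)
            else if v ∈ Mset π then y v else 1) := by
    intro ε
    have h1 : S ^ negB ε * T ^ nsumB ε
        = ∏ v ∈ Finset.univ.filter (fun v => ε v = true), (S * T ^ (v.val + 1)) := by
      rw [Finset.prod_mul_distrib, Finset.prod_const, Finset.prod_pow_eq_pow_sum]
      rfl
    have h2 : (∏ v ∈ rlmB π ε, y v)
        = ∏ v ∈ Finset.univ.filter (fun v => ¬ (ε v = true)),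
            (if v ∈ Mset π then y v else 1) := by
      rw [rlmB_eq]
      have e : (Mset π).filter (fun v => ε v = false)
          = (Finset.univ.filter (fun v => ¬ (ε v = true))).filter (fun v => v ∈ Mset π) := by
        ext v
        simp only [Finset.mem_filter, Finset.mem_univ, true_and, Bool.not_eq_true]
        tauto
      rw [e, Finset.prod_filter]
    have c1 : (∏ v ∈ Finset.univ.filter (fun v => ε v = true), (S * T ^ (v.val + 1)))
        = ∏ v ∈ Finset.univ.filter (fun v => ε v = true),
            (if ε v = true then S * T ^ (v.val + 1)
              else if v ∈ Mset π then y v else 1) := by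
      refine Finset.prod_congr rfl fun v hv => ?_
      simp only [Finset.mem_filter, Finset.mem_univ, true_and] at hv
      rw [if_pos hv]
    have c2 : (∏ v ∈ Finset.univ.filter (fun v => ¬ (ε v = true)),
            (if v ∈ Mset π then y v else 1))
        = ∏ v ∈ Finset.univ.filter (fun v => ¬ (ε v = true)),
            (if ε v = true then S * T ^ (v.val + 1)
              else if v ∈ Mset π then y v else 1) := by
      refine Finset.prod_congr rfl fun v hv => ?_
      simp only [Finset.mem_filter, Finset.mem_univ, true_and] at hv
      rw [if_neg hv]
    rw [h1, h2, c1, c2,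
      Finset.prod_filter_mul_prod_filter_not Finset.univ (fun v => ε v = true)]
  calc ∑ ε : Fin n → Bool, S ^ negB ε * T ^ nsumB ε * ∏ v ∈ rlmB π ε, y v
      = ∑ ε : Fin n → Bool, ∏ v : Fin n,
          (if ε v = true then S * T ^ (v.val + 1) else if v ∈ Mset π then y v else 1) :=
        Finset.sum_congr rfl fun ε _ => hterm ε
    _ = ∏ v : Fin n, ∑ b : Bool,
          (if b = true then S * T ^ (v.val + 1) else if v ∈ Mset π then y v else 1) :=
        (Fintype.prod_sum (κ := fun _ : Fin n => Bool)
          (fun v b => if b = true then S * T ^ (v.val + 1)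
            else if v ∈ Mset π then y v else 1)).symm
    _ = _ := by
        refine Finset.prod_congr rfl fun v _ => ?_
        rw [Fintype.sum_bool, if_pos rfl, if_neg (by simp)]
        by_cases hv : v ∈ Mset π
        · rw [if_pos hv, if_pos hv]
          ring
        · rw [if_neg hv, if_neg hv]
          ring

lemma prod_ite_Mset {R : Type*} [CommRing R] {n : ℕ} (π : Equiv.Perm (Fin n))
    (y : Fin n → R) (S T : R) :
    (∏ v : Fin n,
        (if v ∈ Mset π then y v + S * T ^ (v.val + 1) else 1 + S * T ^ (v.val + 1)))
      = ∑ A ∈ (Finset.univ : Finset (Fin n)).powerset,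
          (if A ⊆ Mset π
            then (∏ v ∈ A, (y v - 1)) * ∏ v ∈ Finset.univ \ A, (1 + S * T ^ (v.val + 1))
            else 0) := by
  classical
  have e1 : Finset.univ.filter (fun v : Fin n => v ∈ Mset π) = Mset π := by
    ext v; simp
  have e2 : Finset.univ.filter (fun v : Fin n => ¬ v ∈ Mset π) = Finset.univ \ Mset π := by
    ext v; simp
  rw [Finset.prod_ite, e1, e2]
  have e3 : (∏ v ∈ Mset π, (y v + S * T ^ (v.val + 1)))
      = ∏ v ∈ Mset π, ((y v - 1) + (1 + S * T ^ (v.val + 1))) :=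
    Finset.prod_congr rfl fun v _ => by ring
  rw [e3, Finset.prod_add, Finset.sum_mul]
  have e4 : ∀ A ∈ (Mset π).powerset,
      (∏ v ∈ A, (y v - 1)) * (∏ v ∈ Mset π \ A, (1 + S * T ^ (v.val + 1)))
          * ∏ v ∈ Finset.univ \ Mset π, (1 + S * T ^ (v.val + 1))
        = (∏ v ∈ A, (y v - 1)) * ∏ v ∈ Finset.univ \ A, (1 + S * T ^ (v.val + 1)) := by
    intro A hA
    rw [Finset.mem_powerset] at hA
    rw [mul_assoc, ← Finset.prod_union]
    · congr 2
      ext v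
      simp only [Finset.mem_union, Finset.mem_sdiff, Finset.mem_univ, true_and]
      constructor
      · rintro (⟨h1, h2⟩ | h1)
        · exact h2
        · exact fun hc => h1 (hA hc)
      · intro h1
        by_cases hm : v ∈ Mset π
        · exact Or.inl ⟨hm, h1⟩
        · exact Or.inr hm
    · rw [Finset.disjoint_left]
      intro v hv
      simp only [Finset.mem_sdiff] at hv ⊢
      simp [hv.1]
  rw [Finset.sum_congr rfl e4]
  have e5 : ∀ A ∈ (Finset.univ : Finset (Fin n)).powerset,
      (if A ⊆ Mset π
        then (∏ v ∈ A, (y v - 1)) * ∏ v ∈ Finset.univ \ A, (1 + S * T ^ (v.val + 1))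
        else 0)
      = (if A ∈ (Mset π).powerset
        then (∏ v ∈ A, (y v - 1)) * ∏ v ∈ Finset.univ \ A, (1 + S * T ^ (v.val + 1))
        else 0) := by
    intro A _
    by_cases h : A ⊆ Mset π
    · rw [if_pos h, if_pos (Finset.mem_powerset.mpr h)]
    · rw [if_neg h, if_neg (fun hc => h (Finset.mem_powerset.mp hc))]
  rw [Finset.sum_congr rfl e5, Finset.sum_ite_mem]
  congr 1
  exact (Finset.inter_eq_right.mpr (Finset.powerset_mono.mpr (Finset.subset_univ _))).symm

lemma final_sum {R : Type*} [CommRing R] {n : ℕ} (y : Fin n → R) (S T : R) :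
    ∑ A ∈ ((Finset.univ : Finset (Fin n)).powerset).filter
        (fun A => (Finset.univ.filter fun v : Fin n => v.val % 2 = 1) ⊆ A),
      ((∏ v ∈ A, (y v - 1)) * ∏ v ∈ Finset.univ \ A, (1 + S * T ^ (v.val + 1)))
    = (∏ v ∈ Finset.univ.filter (fun v : Fin n => v.val % 2 = 1), (y v - 1)) *
        ∏ v ∈ Finset.univ.filter (fun v : Fin n => v.val % 2 = 0),
          (y v + S * T ^ (v.val + 1)) := by
  classical
  set O : Finset (Fin n) := Finset.univ.filter (fun v : Fin n => v.val % 2 = 1) with hO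
  set E : Finset (Fin n) := Finset.univ.filter (fun v : Fin n => v.val % 2 = 0) with hE
  have hOE : ∀ v : Fin n, v ∈ O ↔ ¬ v ∈ E := by
    intro v
    simp only [hO, hE, Finset.mem_filter, Finset.mem_univ, true_and]
    omega
  have eE : (∏ v ∈ E, (y v + S * T ^ (v.val + 1)))
      = ∏ v ∈ E, ((y v - 1) + (1 + S * T ^ (v.val + 1))) :=
    Finset.prod_congr rfl fun v _ => by ring
  rw [eE, Finset.prod_add, Finset.mul_sum]
  refine Finset.sum_nbij' (fun A => A ∩ E) (fun B => B ∪ O) ?_ ?_ ?_ ?_ ?_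
  · intro A _
    exact Finset.mem_powerset.mpr Finset.inter_subset_right
  · intro B hB
    rw [Finset.mem_powerset] at hB
    simp only [Finset.mem_filter, Finset.mem_powerset]
    exact ⟨Finset.subset_univ _, Finset.subset_union_right⟩
  · intro A hA
    simp only [Finset.mem_filter, Finset.mem_powerset] at hA
    ext v
    simp only [Finset.mem_union, Finset.mem_inter]
    constructor
    · rintro (⟨h1, _⟩ | h1)
      · exact h1
      · exact hA.2 h1
    · intro h1
      by_cases hv : v ∈ E
      · exact Or.inl ⟨h1, hv⟩
      · exact Or.inr ((hOE v).mpr hv)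
  · intro B hB
    rw [Finset.mem_powerset] at hB
    ext v
    simp only [Finset.mem_inter, Finset.mem_union]
    constructor
    · rintro ⟨h1 | h1, h2⟩
      · exact h1
      · exact absurd h2 ((hOE v).mp h1)
    · intro h1
      exact ⟨Or.inl h1, hB h1⟩
  · intro A hA
    simp only [Finset.mem_filter, Finset.mem_powerset] at hA
    have hAsplit : A = O ∪ (A ∩ E) := by
      ext v
      simp only [Finset.mem_union, Finset.mem_inter]
      constructor
      · intro h1
        by_cases hv : v ∈ E
        · exact Or.inr ⟨h1, hv⟩
        · exact Or.inl ((hOE v).mpr hv)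
      · rintro (h1 | ⟨h1, _⟩)
        · exact hA.2 h1
        · exact h1
    have hdisj : Disjoint O (A ∩ E) := by
      rw [Finset.disjoint_left]
      intro v hv
      simp only [Finset.mem_inter, not_and]
      intro _
      exact (hOE v).mp hv
    have hsd : Finset.univ \ A = E \ (A ∩ E) := by
      ext v
      simp only [Finset.mem_sdiff, Finset.mem_univ, true_and, Finset.mem_inter, not_and]
      constructor
      · intro h1
        refine ⟨?_, fun hc => absurd hc h1⟩
        by_contra hc
        exact h1 (hA.2 ((hOE v).mpr hc))
      · rintro ⟨h1, h2⟩ hc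
        exact (h2 hc) h1
    calc (∏ v ∈ A, (y v - 1)) * ∏ v ∈ Finset.univ \ A, (1 + S * T ^ (v.val + 1))
        = ((∏ v ∈ O, (y v - 1)) * ∏ v ∈ A ∩ E, (y v - 1))
            * ∏ v ∈ E \ (A ∩ E), (1 + S * T ^ (v.val + 1)) := by
          rw [hsd]
          congr 1
          rw [← Finset.prod_union hdisj, ← hAsplit]
      _ = _ := by ring

end Stmt19Aux

/-- `y v` corresponds to `y_{v+1}`; parity conditions refer to the 1-based
index `v+1`; `S`, `T` are the variables `s`, `t`. -/
theorem stmt19 {R : Type*} [CommRing R] (n : ℕ) (hn : 1 ≤ n)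
    (y : Fin n → R) (S T : R) :
    ∑ π : Equiv.Perm (Fin n), ∑ ε : Fin n → Bool,
      (-1 : R) ^ cyc π * S ^ negB ε * T ^ nsumB ε * ∏ v ∈ rlmB π ε, y v
    = (-1 : R) ^ n *
        (∏ v ∈ Finset.univ.filter (fun v : Fin n => (v.val + 1) % 2 = 0), (y v - 1)) *
        ∏ v ∈ Finset.univ.filter (fun v : Fin n => (v.val + 1) % 2 = 1),
          (y v + S * T ^ (v.val + 1)) := by
  classical
  set O : Finset (Fin n) := Finset.univ.filter (fun v : Fin n => v.val % 2 = 1) with hO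
  set P : Finset (Finset (Fin n)) := (Finset.univ : Finset (Fin n)).powerset with hP
  set Q : Finset (Fin n) → R :=
    fun A => (∏ v ∈ A, (y v - 1)) * ∏ v ∈ Finset.univ \ A, (1 + S * T ^ (v.val + 1))
    with hQ
  have step1 : ∀ π : Equiv.Perm (Fin n),
      (∑ ε : Fin n → Bool,
        (-1 : R) ^ cyc π * S ^ negB ε * T ^ nsumB ε * ∏ v ∈ rlmB π ε, y v)
        = (-1 : R) ^ n * ((Equiv.Perm.sign π : ℤ) : R) *
            ∑ A ∈ P, (if A ⊆ Stmt19Aux.Mset π then Q A else 0) := by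
    intro π
    have h0 : ∀ ε : Fin n → Bool,
        (-1 : R) ^ cyc π * S ^ negB ε * T ^ nsumB ε * ∏ v ∈ rlmB π ε, y v
          = (-1 : R) ^ cyc π * (S ^ negB ε * T ^ nsumB ε * ∏ v ∈ rlmB π ε, y v) := by
      intro ε; ring
    rw [Finset.sum_congr rfl fun ε _ => h0 ε, ← Finset.mul_sum,
      Stmt19Aux.eps_sum π y S T, Stmt19Aux.prod_ite_Mset π y S T,
      Stmt19Aux.neg_one_pow_cyc π]
  rw [Finset.sum_congr rfl fun π _ => step1 π]
  have hinner : ∀ A : Finset (Fin n),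
      (∑ π : Equiv.Perm (Fin n),
        (if A ⊆ Stmt19Aux.Mset π then ((Equiv.Perm.sign π : ℤ) : R) else 0))
        = if O ⊆ A then 1 else 0 := by
    intro A
    rw [hO, ← Stmt19Aux.key n A]
    refine Fintype.sum_equiv (Equiv.inv (Equiv.Perm (Fin n))) _ _ fun π => ?_
    have hcond : (A ⊆ Stmt19Aux.Mset π) ↔ Stmt19Aux.condC A π⁻¹ := by
      constructor
      · intro h v hv u huv
        exact (Stmt19Aux.mem_Mset.mp (h hv)) u huv
      · intro h v hv
        rw [Stmt19Aux.mem_Mset]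
        exact h v hv
    show _ = if Stmt19Aux.condC A π⁻¹ then ((Equiv.Perm.sign π⁻¹ : ℤ) : R) else 0
    by_cases h : A ⊆ Stmt19Aux.Mset π
    · rw [if_pos h, if_pos (hcond.mp h), Equiv.Perm.sign_inv]
    · rw [if_neg h, if_neg (fun hc => h (hcond.mpr hc))]
  calc ∑ π : Equiv.Perm (Fin n),
        ((-1 : R) ^ n * ((Equiv.Perm.sign π : ℤ) : R) *
          ∑ A ∈ P, (if A ⊆ Stmt19Aux.Mset π then Q A else 0))
      = ∑ π : Equiv.Perm (Fin n), ∑ A ∈ P,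
          ((-1 : R) ^ n * (Q A *
            (if A ⊆ Stmt19Aux.Mset π then ((Equiv.Perm.sign π : ℤ) : R) else 0))) := by
        refine Finset.sum_congr rfl fun π _ => ?_
        rw [Finset.mul_sum]
        refine Finset.sum_congr rfl fun A _ => ?_
        by_cases h : A ⊆ Stmt19Aux.Mset π
        · rw [if_pos h, if_pos h]; ring
        · rw [if_neg h, if_neg h]; ring
    _ = ∑ A ∈ P, ∑ π : Equiv.Perm (Fin n),
          ((-1 : R) ^ n * (Q A *
            (if A ⊆ Stmt19Aux.Mset π then ((Equiv.Perm.sign π : ℤ) : R) else 0))) :=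
        Finset.sum_comm
    _ = ∑ A ∈ P, ((-1 : R) ^ n * (Q A * (if O ⊆ A then 1 else 0))) := by
        refine Finset.sum_congr rfl fun A _ => ?_
        rw [← Finset.mul_sum, ← Finset.mul_sum, hinner A]
    _ = (-1 : R) ^ n * ∑ A ∈ P.filter (fun A => O ⊆ A), Q A := by
        rw [← Finset.mul_sum]
        congr 1
        rw [Finset.sum_filter]
        refine Finset.sum_congr rfl fun A _ => ?_
        by_cases h : O ⊆ A
        · rw [if_pos h, if_pos h, mul_one]
        · rw [if_neg h, if_neg h, mul_zero]
    _ = _ := by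
        rw [hP, hQ, hO, Stmt19Aux.final_sum y S T]
        have hf1 : Finset.univ.filter (fun v : Fin n => (v.val + 1) % 2 = 0)
            = Finset.univ.filter (fun v : Fin n => v.val % 2 = 1) :=
          Finset.filter_congr fun v _ => by omega
        have hf2 : Finset.univ.filter (fun v : Fin n => (v.val + 1) % 2 = 1)
            = Finset.univ.filter (fun v : Fin n => v.val % 2 = 0) :=
          Finset.filter_congr fun v _ => by omega
        rw [hf1, hf2, mul_assoc]
end
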